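/- Let A and B be positive bounded operators on a complex Hilbert space H with A ≤ B, and let S be a positive operator such that S[x] = sup_{n∈ℕ} inf_{y∈H} (B[x−y] + n·A[y]) for all x ∈ H (i.e. S = [A]B). Then A = S if and only if A and B − A are singular. -/

import Mathlib

open scoped ComplexOrder

/-- `A` is a positive operator: `⟪A x, x⟫ ≥ 0` for all `x`. -/
def IsPosOp {H : Type*} [NormedAddCommGroup H] [InnerProductSpace ℂ H]
    (A : H →L[ℂ] H) : Prop :=
  ∀ x : H, 0 ≤ (inner ℂ (A x) x : ℂ)

/-- The Loewner order: `A ≤ B` iff `B - A` is positive. -/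
def OpLe {H : Type*} [NormedAddCommGroup H] [InnerProductSpace ℂ H]
    (A B : H →L[ℂ] H) : Prop :=
  IsPosOp (B - A)

/-- The quadratic form of an operator: `A[x] = re ⟪A x, x⟫`. -/
noncomputable def QF {H : Type*} [NormedAddCommGroup H] [InnerProductSpace ℂ H]
    (A : H →L[ℂ] H) (x : H) : ℝ :=
  (inner ℂ (A x) x : ℂ).re

/-- `A` and `B` are singular: the only positive operator below both is `0`. -/
def SingOp {H : Type*} [NormedAddCommGroup H] [InnerProductSpace ℂ H]
    (A B : H →L[ℂ] H) : Prop :=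
  ∀ C : H →L[ℂ] H, IsPosOp C → OpLe C A → OpLe C B → C = 0

/-- `B` is `A`-absolutely continuous: `B` is the strong limit of a monotone increasing
sequence of positive operators, each dominated by a nonnegative multiple of `A`. -/
def AbsCont {H : Type*} [NormedAddCommGroup H] [InnerProductSpace ℂ H]
    (B A : H →L[ℂ] H) : Prop :=
  ∃ Bn : ℕ → H →L[ℂ] H,
    (∀ n, IsPosOp (Bn n)) ∧
    (∀ m n, m ≤ n → OpLe (Bn m) (Bn n)) ∧
    (∀ n, ∃ c : ℝ, 0 ≤ c ∧ OpLe (Bn n) (c • A)) ∧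
    (∀ x : H, Filter.Tendsto (fun n => Bn n x) Filter.atTop (nhds (B x)))

/-- `S = [A]B`: the quadratic form of `S` is `sup_n inf_y (B[x-y] + n·A[y])`. -/
def IsShort {H : Type*} [NormedAddCommGroup H] [InnerProductSpace ℂ H]
    (A B S : H →L[ℂ] H) : Prop :=
  ∀ x : H, QF S x = ⨆ n : ℕ, ⨅ y : H, (QF B (x - y) + (n : ℝ) * QF A y)

/-!
Every positive `T` with `T ≤ B` and `T ≤ c • A` lies below `[A]B`: splitting `x = (x - y) + y`
gives `T[x] ≤ (1 + c/n) (B[x - y] + n A[y])` for all `y`. For a common minorant `C` of `A` and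
`B - A`, the operator `T = A + C` is such a `T`, so `A = [A]B` forces `C = 0`.

Conversely, the regularized parallel sums `A - A (B + ε)⁻¹ A`, with quadratic forms
`min_y (A[x - y] + (B - A)[y] + ε‖y‖²)`, decrease strongly as `ε ↓ 0` to a common minorant of `A`
and `B - A`. If these are singular the limit is `0`, so some `y` make both `A[x - y]` and
`(B - A)[y]` small; testing the infimum defining `[A]B` at `x - y` then gives `[A]B[x] ≤ A[x]`.
-/

open Filter Topology

section

variable {H : Type*} [NormedAddCommGroup H] [InnerProductSpace ℂ H]

section LoewnerOrder

variable {A B : H →L[ℂ] H}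

theorem isPosOp_iff_isPositive : IsPosOp A ↔ A.IsPositive := by
  rw [ContinuousLinearMap.isPositive_iff_complex]
  simp only [IsPosOp, Complex.nonneg_iff, Complex.ext_iff]
  simp [and_comm]

theorem isPosOp_iff_nonneg : IsPosOp A ↔ 0 ≤ A := by
  rw [isPosOp_iff_isPositive, ContinuousLinearMap.nonneg_iff_isPositive]

theorem opLe_iff_le : OpLe A B ↔ A ≤ B := isPosOp_iff_isPositive

theorem singOp_iff : SingOp A B ↔ ∀ C : H →L[ℂ] H, 0 ≤ C → C ≤ A → C ≤ B → C = 0 := by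
  simp only [SingOp, isPosOp_iff_nonneg, opLe_iff_le]

theorem nonneg_of_tendsto_apply {ι : Type*} {l : Filter ι} [l.NeBot] {T : ι → H →L[ℂ] H}
    {L : H →L[ℂ] H} (hT : ∀ x, Tendsto (fun i => T i x) l (𝓝 (L x)))
    (h : ∀ᶠ i in l, 0 ≤ T i) : 0 ≤ L := by
  refine isPosOp_iff_nonneg.1 fun x => ge_of_tendsto ((hT x).inner tendsto_const_nhds) ?_
  exact h.mono fun i hi => isPosOp_iff_nonneg.2 hi x

end LoewnerOrder

section QuadraticForm

variable {A B : H →L[ℂ] H}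

@[simp] theorem qf_zero_left (x : H) : QF (0 : H →L[ℂ] H) x = 0 := by simp [QF]

@[simp] theorem qf_zero_right (A : H →L[ℂ] H) : QF A 0 = 0 := by simp [QF]

theorem qf_sub_left (A B : H →L[ℂ] H) (x : H) : QF (A - B) x = QF A x - QF B x := by
  simp [QF]

theorem qf_add_left (A B : H →L[ℂ] H) (x : H) : QF (A + B) x = QF A x + QF B x := by
  simp [QF]

theorem qf_smul_left (c : ℝ) (A : H →L[ℂ] H) (x : H) : QF (c • A) x = c * QF A x := by
  simp [QF]

theorem qf_one (x : H) : QF (1 : H →L[ℂ] H) x = ‖x‖ ^ 2 := by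
  simp [QF, inner_self_eq_norm_sq_to_K, ← Complex.ofReal_pow]

theorem qf_nonneg (hA : 0 ≤ A) (x : H) : 0 ≤ QF A x :=
  ((ContinuousLinearMap.nonneg_iff_isPositive A).1 hA).re_inner_nonneg_left x

theorem qf_le_qf (h : A ≤ B) (x : H) : QF A x ≤ QF B x := by
  have : 0 ≤ QF (B - A) x := h.re_inner_nonneg_left x
  rwa [qf_sub_left, sub_nonneg] at this

theorem tendsto_qf_of_tendsto_apply {ι : Type*} {l : Filter ι} {T : ι → H →L[ℂ] H}
    {L : H →L[ℂ] H} {x : H} (hT : Tendsto (fun i => T i x) l (𝓝 (L x))) :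
    Tendsto (fun i => QF (T i) x) l (𝓝 (QF L x)) :=
  (Complex.continuous_re.tendsto _).comp (hT.inner tendsto_const_nhds)

variable [CompleteSpace H]

theorem le_of_qf_le (hA : IsSelfAdjoint A) (hB : IsSelfAdjoint B)
    (h : ∀ x, QF A x ≤ QF B x) : A ≤ B :=
  ⟨(hB.sub hA).isSymmetric, fun x =>
    show 0 ≤ QF (B - A) x from (qf_sub_left B A x).symm ▸ sub_nonneg.2 (h x)⟩

theorem re_inner_apply_comm (hA : IsSelfAdjoint A) (x y : H) :
    (inner ℂ (A x) y).re = (inner ℂ (A y) x).re := by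
  rw [show inner ℂ (A x) y = inner ℂ x (A y) from hA.isSymmetric x y, ← inner_conj_symm,
    Complex.conj_re]

theorem qf_sub_right (hA : IsSelfAdjoint A) (x y : H) :
    QF A (x - y) = QF A x - 2 * (inner ℂ (A x) y).re + QF A y := by
  simp only [QF, map_sub, inner_sub_left, inner_sub_right, Complex.sub_re,
    re_inner_apply_comm hA y x]
  ring

end QuadraticForm

section SquareRoot

variable [CompleteSpace H] {A : H →L[ℂ] H}

theorem qf_eq_norm_sqrt_apply_sq (hA : 0 ≤ A) (x : H) : QF A x = ‖CFC.sqrt A x‖ ^ 2 := by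
  have hR : IsSelfAdjoint (CFC.sqrt A) := (CFC.sqrt_nonneg A).isSelfAdjoint
  conv_lhs => rw [← CFC.sqrt_mul_sqrt_self A]
  rw [QF, mul_apply_eq_comp, show inner ℂ (CFC.sqrt A (CFC.sqrt A x)) x =
    inner ℂ (CFC.sqrt A x) (CFC.sqrt A x) from hR.isSymmetric _ _, inner_self_eq_norm_sq_to_K]
  simp [← Complex.ofReal_pow]

theorem norm_apply_sq_le_norm_mul_qf (hA : 0 ≤ A) (x : H) : ‖A x‖ ^ 2 ≤ ‖A‖ * QF A x := by
  have hR : IsSelfAdjoint (CFC.sqrt A) := (CFC.sqrt_nonneg A).isSelfAdjoint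
  have hnorm : ‖A‖ = ‖CFC.sqrt A‖ ^ 2 := by
    rw [sq, ← CStarRing.norm_star_mul_self, hR.star_eq, CFC.sqrt_mul_sqrt_self A]
  calc ‖A x‖ ^ 2 = ‖CFC.sqrt A (CFC.sqrt A x)‖ ^ 2 := by
        rw [← mul_apply_eq_comp, CFC.sqrt_mul_sqrt_self A]
    _ ≤ (‖CFC.sqrt A‖ * ‖CFC.sqrt A x‖) ^ 2 := by gcongr; exact ContinuousLinearMap.le_opNorm _ _
    _ = ‖A‖ * QF A x := by rw [hnorm, qf_eq_norm_sqrt_apply_sq hA]; ring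

theorem qf_add_le (hA : 0 ≤ A) (x y : H) {t : ℝ} (ht : 0 < t) :
    QF A (x + y) ≤ (1 + t) * QF A x + (1 + t⁻¹) * QF A y := by
  simp only [qf_eq_norm_sqrt_apply_sq hA, map_add]
  set a := ‖CFC.sqrt A x‖
  set b := ‖CFC.sqrt A y‖
  have hamgm : 2 * a * b ≤ t * a ^ 2 + t⁻¹ * b ^ 2 := by
    have := sq_nonneg (t * a - b)
    have := mul_inv_cancel₀ ht.ne'
    nlinarith [inv_pos.2 ht]
  calc ‖CFC.sqrt A x + CFC.sqrt A y‖ ^ 2 ≤ (a + b) ^ 2 := by gcongr; exact norm_add_le _ _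
    _ ≤ (1 + t) * a ^ 2 + (1 + t⁻¹) * b ^ 2 := by nlinarith

theorem tendsto_qf_of_tendsto_qf_sub (hA : 0 ≤ A) {x : H} {y : ℕ → H}
    (hy : Tendsto (fun k => QF A (x - y k)) atTop (𝓝 0)) :
    Tendsto (fun k => QF A (y k)) atTop (𝓝 (QF A x)) := by
  simp only [qf_eq_norm_sqrt_apply_sq hA, map_sub] at hy ⊢
  have : Tendsto (fun k => CFC.sqrt A (y k)) atTop (𝓝 (CFC.sqrt A x)) := by
    rw [tendsto_iff_norm_sub_tendsto_zero]
    simpa [norm_sub_rev] using hy.sqrt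
  exact this.norm.pow 2

end SquareRoot

section MonotoneConvergence

variable [CompleteSpace H] {T : ℕ → H →L[ℂ] H}

theorem norm_sub_apply_sq_le_of_antitone (hT : Antitone T) (h0 : ∀ n, 0 ≤ T n) {m n : ℕ}
    (hmn : m ≤ n) (x : H) :
    ‖T m x - T n x‖ ^ 2 ≤ ‖T 0‖ * (QF (T m) x - QF (T n) x) := by
  have hP : 0 ≤ T m - T n := sub_nonneg.2 (hT hmn)
  have hnorm : ‖T m - T n‖ ≤ ‖T 0‖ :=
    CStarAlgebra.norm_le_norm_of_nonneg_of_le hP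
      ((sub_le_self _ (h0 n)).trans (hT (Nat.zero_le m)))
  calc ‖T m x - T n x‖ ^ 2 ≤ ‖T m - T n‖ * QF (T m - T n) x :=
        norm_apply_sq_le_norm_mul_qf hP x
    _ ≤ ‖T 0‖ * (QF (T m) x - QF (T n) x) := by
        rw [← qf_sub_left]; gcongr; exact qf_nonneg hP x

theorem cauchySeq_apply_of_antitone (hT : Antitone T) (h0 : ∀ n, 0 ≤ T n) (x : H) :
    CauchySeq fun n => T n x := by
  have hq : Antitone fun n => QF (T n) x := fun m n hmn => qf_le_qf (hT hmn) x
  obtain ⟨l, hl⟩ : ∃ l, Tendsto (fun n => QF (T n) x) atTop (𝓝 l) :=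
    ⟨_, tendsto_atTop_ciInf hq ⟨0, by rintro _ ⟨n, rfl⟩; exact qf_nonneg (h0 n) x⟩⟩
  have hdist : ∀ m n N, N ≤ m → m ≤ n → dist (T m x) (T n x) ≤ √(‖T 0‖ * (QF (T N) x - l)) := by
    intro m n N hNm hmn
    rw [dist_eq_norm, ← Real.sqrt_sq (norm_nonneg _)]
    refine Real.sqrt_le_sqrt ((norm_sub_apply_sq_le_of_antitone hT h0 hmn x).trans ?_)
    gcongr
    · exact hq hNm
    · exact hq.le_of_tendsto hl n
  refine cauchySeq_of_le_tendsto_0 (fun N => √(‖T 0‖ * (QF (T N) x - l))) (fun m n N hm hn => ?_) ?_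
  · rcases le_total m n with hmn | hnm
    · exact hdist m n N hm hmn
    · exact dist_comm (T m x) _ ▸ hdist n m N hn hnm
  · simpa using ((hl.sub_const l).const_mul ‖T 0‖).sqrt

theorem exists_tendsto_apply_of_antitone (hT : Antitone T) (h0 : ∀ n, 0 ≤ T n) :
    ∃ L : H →L[ℂ] H, 0 ≤ L ∧ (∀ n, L ≤ T n) ∧ ∀ x, Tendsto (fun n => T n x) atTop (𝓝 (L x)) := by
  choose F hF using fun x => cauchySeq_tendsto_of_complete (cauchySeq_apply_of_antitone hT h0 x)
  set L := continuousLinearMapOfTendsto T (tendsto_pi_nhds.2 hF)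
  have hL : ∀ x, Tendsto (fun n => T n x) atTop (𝓝 (L x)) := hF
  refine ⟨L, nonneg_of_tendsto_apply hL (.of_forall h0), fun n => ?_, hL⟩
  refine sub_nonneg.1 (nonneg_of_tendsto_apply (T := fun k => T n - T k)
    (fun x => (hL x).const_sub (T n x)) ?_)
  exact eventually_atTop.2 ⟨n, fun k hk => sub_nonneg.2 (hT hk)⟩

end MonotoneConvergence

section ParallelSum

variable [CompleteSpace H] {A D : H →L[ℂ] H}

theorem exists_qf_isLeast_regularized_parallelSum (hA : 0 ≤ A) (hD : 0 ≤ D) {ε : ℝ}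
    (hε : 0 < ε) : ∃ C : H →L[ℂ] H, IsSelfAdjoint C ∧
      ∀ x, IsLeast (Set.range fun y => QF A (x - y) + QF D y + ε * ‖y‖ ^ 2) (QF C x) := by
  set M := A + D + ε • (1 : H →L[ℂ] H)
  have hQFM : ∀ y, QF M y = QF A y + QF D y + ε * ‖y‖ ^ 2 := fun y => by
    rw [qf_add_left, qf_add_left, qf_smul_left, qf_one]
  have hM0 : 0 ≤ M := add_nonneg (add_nonneg hA hD) (smul_nonneg hε.le zero_le_one)
  have hM : IsSelfAdjoint M := hM0.isSelfAdjoint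
  have hMu : IsUnit M := by
    refine ContinuousLinearMap.isUnit_of_forall_le_norm_inner_map M (c := ⟨ε, hε.le⟩) hε fun y => ?_
    calc ‖y‖ ^ 2 * ε ≤ QF M y := by
          rw [hQFM]; nlinarith [qf_nonneg hA y, qf_nonneg hD y]
      _ ≤ ‖inner ℂ (M y) y‖ := Complex.re_le_norm _
  set R := Ring.inverse M
  have hMR : ∀ z, M (R z) = z := fun z => by
    rw [← mul_apply_eq_comp, Ring.mul_inverse_cancel M hMu, one_apply_eq_self]
  have hAsa : IsSelfAdjoint A := hA.isSelfAdjoint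
  have hCsa : IsSelfAdjoint (A - A * R * A) := by
    simpa [hAsa.star_eq] using hAsa.sub (hM.ringInverse.conjugate A)
  -- completing the square in `y`, using `M (R (A x)) = A x`
  have key : ∀ x y, QF A (x - y) + QF D y + ε * ‖y‖ ^ 2 =
      QF (A - A * R * A) x + QF M (y - R (A x)) := by
    intro x y
    have h1 : (inner ℂ (M y) (R (A x))).re = (inner ℂ (A x) y).re := by
      rw [re_inner_apply_comm hM, hMR]
    have h2 : QF M (R (A x)) = (inner ℂ (A x) (R (A x))).re := by rw [QF, hMR]
    have h3 : QF (A * R * A) x = (inner ℂ (A x) (R (A x))).re := by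
      rw [QF, mul_apply_eq_comp, mul_apply_eq_comp, re_inner_apply_comm hAsa]
    rw [qf_sub_left, qf_sub_right hAsa, qf_sub_right hM, hQFM, h1, h2, h3]
    ring
  refine ⟨A - A * R * A, hCsa, fun x => ⟨⟨R (A x), ?_⟩, ?_⟩⟩
  · simp [key]
  · rintro _ ⟨y, rfl⟩
    simpa [key] using qf_nonneg hM0 (y - R (A x))

theorem exists_seq_tendsto_qf_zero_of_singOp (hA : 0 ≤ A) (hD : 0 ≤ D) (hsing : SingOp A D)
    (x : H) : ∃ y : ℕ → H, Tendsto (fun k => QF A (x - y k)) atTop (𝓝 0) ∧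
      Tendsto (fun k => QF D (y k)) atTop (𝓝 0) := by
  set ε : ℕ → ℝ := fun n => 1 / ((n : ℝ) + 1)
  have hε : ∀ n, 0 < ε n := fun n => Nat.one_div_pos_of_nat
  choose C hCsa hC using fun n => exists_qf_isLeast_regularized_parallelSum hA hD (hε n)
  have hC_le : ∀ n z y, QF (C n) z ≤ QF A (z - y) + QF D y + ε n * ‖y‖ ^ 2 :=
    fun n z y => (hC n z).2 ⟨y, rfl⟩
  have hC_nonneg : ∀ n, 0 ≤ C n := fun n => le_of_qf_le (.zero _) (hCsa n) fun z => by
    obtain ⟨y, hy⟩ := (hC n z).1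
    rw [qf_zero_left, ← hy]
    have := qf_nonneg hA (z - y); have := qf_nonneg hD y; have := hε n
    positivity
  have hanti : Antitone C := fun m n hmn => le_of_qf_le (hCsa n) (hCsa m) fun z => by
    obtain ⟨y, hy⟩ := (hC m z).1
    rw [← hy]
    refine (hC_le n z y).trans ?_
    dsimp only [ε]
    gcongr
  obtain ⟨L, hL0, hLC, hLim⟩ := exists_tendsto_apply_of_antitone hanti hC_nonneg
  have hLA : L ≤ A := (hLC 0).trans <|
    le_of_qf_le (hCsa 0) hA.isSelfAdjoint fun z => by simpa using hC_le 0 z 0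
  have hLD : L ≤ D := le_of_qf_le hL0.isSelfAdjoint hD.isSelfAdjoint fun z => by
    have hlim : Tendsto (fun n => QF D z + ε n * ‖z‖ ^ 2) atTop (𝓝 (QF D z)) := by
      simpa [ε] using
        (tendsto_one_div_add_atTop_nhds_zero_nat.mul_const (‖z‖ ^ 2)).const_add (QF D z)
    exact ge_of_tendsto' hlim fun n => (qf_le_qf (hLC n) z).trans (by simpa using hC_le n z z)
  have hCx : Tendsto (fun n => QF (C n) x) atTop (𝓝 0) := by
    simpa [singOp_iff.1 hsing L hL0 hLA hLD] using tendsto_qf_of_tendsto_apply (hLim x)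
  choose y hy using fun n => (hC n x).1
  have hsum : ∀ n, QF A (x - y n) + QF D (y n) ≤ QF (C n) x := fun n => by
    rw [← hy n]; have := hε n; simp only [le_add_iff_nonneg_right]; positivity
  refine ⟨y, squeeze_zero (fun n => qf_nonneg hA _) (fun n => ?_) hCx,
    squeeze_zero (fun n => qf_nonneg hD _) (fun n => ?_) hCx⟩
  · linarith [hsum n, qf_nonneg hD (y n)]
  · linarith [hsum n, qf_nonneg hA (x - y n)]

end ParallelSum

section Short

variable {A B S T : H →L[ℂ] H}

theorem bddBelow_range_qf_sub_add_mul_qf (hA : 0 ≤ A) (hB : 0 ≤ B) (x : H) (n : ℕ) :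
    BddBelow (Set.range fun y => QF B (x - y) + n * QF A y) :=
  ⟨0, by
    rintro _ ⟨y, rfl⟩
    have := qf_nonneg hA y; have := qf_nonneg hB (x - y)
    positivity⟩

variable [CompleteSpace H]

theorem le_of_isShort (hA : 0 ≤ A) (hB : 0 ≤ B) (hS0 : 0 ≤ S) (hS : IsShort A B S) (hT : 0 ≤ T)
    (hTB : T ≤ B) {c : ℝ} (hc : 0 < c) (hTA : T ≤ c • A) : T ≤ S := by
  refine le_of_qf_le hT.isSelfAdjoint hS0.isSelfAdjoint fun x => ?_
  have hlow : ∀ n : ℕ, QF T x / (1 + c / (n + 1)) ≤ ⨅ y, QF B (x - y) + (n + 1 : ℕ) * QF A y := by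
    intro n
    refine le_ciInf fun y => ?_
    have hn : (0 : ℝ) < n + 1 := n.cast_add_one_pos
    rw [div_le_iff₀ (by positivity)]
    have hsplit := qf_add_le hT (x - y) y (div_pos hc hn)
    rw [sub_add_cancel] at hsplit
    have hy : (1 + (c / (n + 1))⁻¹) * QF T y ≤ (n + 1 + c) * QF A y := by
      calc (1 + (c / (n + 1))⁻¹) * QF T y ≤ (1 + (c / (n + 1))⁻¹) * (c * QF A y) := by
            gcongr; simpa [qf_smul_left] using qf_le_qf hTA y
        _ = (n + 1 + c) * QF A y := by field_simp; ring
    have hxy : (1 + c / (n + 1)) * QF T (x - y) ≤ (1 + c / (n + 1)) * QF B (x - y) := by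
      gcongr; exact qf_le_qf hTB (x - y)
    calc QF T x ≤ (1 + c / (n + 1)) * QF B (x - y) + (n + 1 + c) * QF A y := by linarith
      _ = (QF B (x - y) + (n + 1 : ℕ) * QF A y) * (1 + c / (n + 1)) := by
          push_cast; field_simp
  have hbdd : BddAbove (Set.range fun n : ℕ => ⨅ y, QF B (x - y) + n * QF A y) := ⟨QF B x, by
    rintro _ ⟨n, rfl⟩
    simpa using ciInf_le (bddBelow_range_qf_sub_add_mul_qf hA hB x n) 0⟩
  have hlim : Tendsto (fun n : ℕ => QF T x / (1 + c / (n + 1))) atTop (𝓝 (QF T x)) := by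
    have ht : Tendsto (fun n : ℕ => c / ((n : ℝ) + 1)) atTop (𝓝 0) := by
      simpa [div_eq_mul_inv] using tendsto_one_div_add_atTop_nhds_zero_nat.const_mul c
    have h := (tendsto_const_nhds (x := QF T x)).div ((tendsto_const_nhds (x := (1 : ℝ))).add ht)
      (by norm_num)
    rwa [add_zero, div_one] at h
  refine le_of_tendsto' hlim fun n => (hlow n).trans ?_
  rw [hS x]
  exact le_ciSup hbdd (n + 1)

theorem le_of_isShort_of_singOp (hA : 0 ≤ A) (hAB : A ≤ B) (hS0 : 0 ≤ S) (hS : IsShort A B S)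
    (hsing : SingOp A (B - A)) : S ≤ A := by
  refine le_of_qf_le hS0.isSelfAdjoint hA.isSelfAdjoint fun x => ?_
  obtain ⟨y, hxy, hy⟩ := exists_seq_tendsto_qf_zero_of_singOp hA (sub_nonneg.2 hAB) hsing x
  rw [hS x]
  refine ciSup_le fun n => ?_
  have hlim : Tendsto (fun k => QF B (x - (x - y k)) + n * QF A (x - y k)) atTop (𝓝 (QF A x)) := by
    simpa [qf_sub_left] using
      ((tendsto_qf_of_tendsto_qf_sub hA hxy).add hy).add (hxy.const_mul (n : ℝ))
  exact ge_of_tendsto' hlim fun k =>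
    ciInf_le (bddBelow_range_qf_sub_add_mul_qf hA (hA.trans hAB) x n) (x - y k)

end Short

end

theorem quasi_unit_iff_singular_general
    {H : Type*} [NormedAddCommGroup H] [InnerProductSpace ℂ H] [CompleteSpace H]
    (A B S : H →L[ℂ] H) (hA : IsPosOp A) (hS : IsPosOp S)
    (hAB : OpLe A B) (hshort : IsShort A B S) :
    A = S ↔ SingOp A (B - A) := by
  rw [isPosOp_iff_nonneg] at hA hS
  rw [opLe_iff_le] at hAB
  have hB : 0 ≤ B := hA.trans hAB
  constructor
  · rintro rfl
    refine singOp_iff.2 fun C hC hCA hCD => le_antisymm ?_ hC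
    have hACB : A + C ≤ B := by simpa [add_comm] using add_le_add_right hCD A
    have hAC2A : A + C ≤ (2 : ℝ) • A := by simpa [two_smul] using add_le_add_left hCA A
    simpa using le_of_isShort hA hB hA hshort (add_nonneg hA hC) hACB two_pos hAC2A
  · intro hsing
    exact le_antisymm (le_of_isShort hA hB hS hshort hA hAB one_pos (by rw [one_smul]))
      (le_of_isShort_of_singOp hA hAB hS hshort hsing)

theorem quasi_unit_iff_singular
    {H : Type*} [NormedAddCommGroup H] [InnerProductSpace ℂ H] [CompleteSpace H]
    (A B S : H →L[ℂ] H) (hA : IsPosOp A) (hB : IsPosOp B) (hS : IsPosOp S)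
    (hAB : OpLe A B) (hshort : IsShort A B S) :
    A = S ↔ SingOp A (B - A) :=
  quasi_unit_iff_singular_general A B S hA hS hAB hshort
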